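/- arXiv:2407.10158 — 2 statements merged into one kernel-verified Lean document; each statement's English description precedes it below -/
import Mathlib

section
/- Let m, n be positive integers and h a norm on ℝ^m. Let M ∈ ℝ^{m×n} satisfy h_*(M u) ≤ |u| for all u ∈ ℝ^n (i.e. M ∈ ∂H(0)). If θ ∈ ℝ^m and e ∈ ℝ^n is a unit vector with θ · (M e) = h(θ), then Mᵀ θ = h(θ) e. -/
open MeasureTheory

noncomputable section

/-- `ℝ^n` with the Euclidean norm. -/
abbrev Euc (n : ℕ) := EuclideanSpace ℝ (Fin n)

/-- `h` is a norm on `ℝ^m`. -/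
def IsNorm {m : ℕ} (h : (Fin m → ℝ) → ℝ) : Prop :=
  (∀ x y, h (x + y) ≤ h x + h y) ∧ (∀ (c : ℝ) (x), h (c • x) = |c| * h x) ∧
    ∀ x, h x = 0 → x = 0

/-- The dual norm `h_*` of `h`: `h_*(g) = sup { g·θ : h θ ≤ 1 }`. -/
def dualNorm {m : ℕ} (h : (Fin m → ℝ) → ℝ) (g : Fin m → ℝ) : ℝ :=
  sSup {r | ∃ θ : Fin m → ℝ, h θ ≤ 1 ∧ r = ∑ i, g i * θ i}

/-- Matrix-vector product `M u`. -/
def matVec {m n : ℕ} (M : Fin m → Fin n → ℝ) (u : Euc n) : Fin m → ℝ :=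
  fun i => ∑ j, M i j * u j

/-- Frobenius inner product `M : N`. -/
def frob {m n : ℕ} (M N : Fin m → Fin n → ℝ) : ℝ := ∑ i, ∑ j, M i j * N i j

/-- `M ∈ ∂H(0)`, i.e. `h_*(M u) ≤ 1` for all `|u| ≤ 1`. -/
def inSubdiffH {m n : ℕ} (h : (Fin m → ℝ) → ℝ) (M : Fin m → Fin n → ℝ) : Prop :=
  ∀ u : Euc n, ‖u‖ ≤ 1 → dualNorm h (matVec M u) ≤ 1

/-- The norm `H` on `ℝ^{m×n}` generated by `h`:
`H(N) = sup { M:N : M ∈ ∂H(0) }`. -/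
def genNorm {m n : ℕ} (h : (Fin m → ℝ) → ℝ) (N : Fin m → Fin n → ℝ) : ℝ :=
  sSup {r | ∃ M : Fin m → Fin n → ℝ, inSubdiffH h M ∧ r = frob M N}

/-- The rank-one matrix `θ ⊗ e`. -/
def outer {m n : ℕ} (θ : Fin m → ℝ) (e : Euc n) : Fin m → Fin n → ℝ :=
  fun i j => θ i * e j

/-! Pairing `Mᵀθ` with any `u` gives `θ · (M u) ≤ h(θ) h_*(M u) ≤ h(θ) |u|`, so `|Mᵀθ| ≤ h(θ)`.
Since `Mᵀθ · e = h(θ)` for the unit vector `e`, this is the equality case of Cauchy–Schwarz,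
which forces `Mᵀθ = h(θ) e`. The only analytic input is that the dual norm is a genuine
supremum, i.e. that the unit ball of `h` is bounded, which holds by compactness of the sphere. -/

theorem eq_smul_of_inner_le_mul_norm {E : Type*} [NormedAddCommGroup E] [InnerProductSpace ℝ E]
    {v e : E} {a : ℝ} (hv : ∀ u, inner ℝ v u ≤ a * ‖u‖) (he : ‖e‖ = 1) (hve : inner ℝ v e = a) :
    v = a • e := by
  have hnorm_le : ‖v‖ ≤ a := by
    rcases (norm_nonneg v).eq_or_lt with hv0 | hv0
    · rw [← hv0, ← hve, norm_eq_zero.mp hv0.symm, inner_zero_left]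
    · have := hv v
      rw [real_inner_self_eq_norm_sq, sq] at this
      exact le_of_mul_le_mul_right this hv0
  have hnorm : ‖v‖ = a := by
    have hcs := real_inner_le_norm v e
    rw [he, mul_one, hve] at hcs
    exact hnorm_le.antisymm hcs
  have hcs := (inner_eq_norm_mul_iff_real (x := v) (y := e)).mp (by rw [he, mul_one, hnorm, hve])
  rwa [he, one_smul, hnorm] at hcs

namespace IsNorm

variable {m : ℕ} {h : (Fin m → ℝ) → ℝ}

def toSeminorm (hh : IsNorm h) : Seminorm ℝ (Fin m → ℝ) :=
  Seminorm.of h hh.1 hh.2.1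

lemma map_zero (hh : IsNorm h) : h 0 = 0 :=
  _root_.map_zero hh.toSeminorm

lemma nonneg (hh : IsNorm h) (x : Fin m → ℝ) : 0 ≤ h x :=
  apply_nonneg hh.toSeminorm x

lemma continuous (hh : IsNorm h) : Continuous h :=
  continuousOn_univ.mp (hh.toSeminorm.convexOn.continuousOn isOpen_univ)

lemma exists_pos_mul_norm_le (hh : IsNorm h) : ∃ c > 0, ∀ x, c * ‖x‖ ≤ h x := by
  have hpos : ∀ x ∈ Metric.sphere (0 : Fin m → ℝ) 1, 0 < h x := fun x hx =>
    (hh.nonneg x).lt_of_ne fun hx0 => by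
      simp [hh.2.2 x hx0.symm] at hx
  obtain ⟨c, hc, hcle⟩ :=
    (isCompact_sphere (0 : Fin m → ℝ) 1).exists_forall_le' hh.continuous.continuousOn hpos
  refine ⟨c, hc, fun x => ?_⟩
  rcases eq_or_ne x 0 with rfl | hx
  · simpa using hh.nonneg 0
  have hxpos : 0 < ‖x‖ := norm_pos_iff.mpr hx
  have hunit : ‖x‖⁻¹ • x ∈ Metric.sphere (0 : Fin m → ℝ) 1 := by
    simp [norm_smul, hxpos.ne']
  have := hcle _ hunit
  rw [hh.2.1, abs_of_pos (inv_pos.mpr hxpos), le_inv_mul_iff₀ hxpos] at this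
  linarith

lemma isBounded_setOf_le_one (hh : IsNorm h) : Bornology.IsBounded {θ | h θ ≤ 1} := by
  obtain ⟨c, hc, hle⟩ := hh.exists_pos_mul_norm_le
  refine (Metric.isBounded_closedBall (x := 0) (r := c⁻¹)).subset fun θ hθ => ?_
  rw [mem_closedBall_zero_iff, ← one_div, le_div_iff₀' hc]
  exact (hle θ).trans hθ

lemma bddAbove_dualNorm_set (hh : IsNorm h) (g : Fin m → ℝ) :
    BddAbove {r | ∃ θ : Fin m → ℝ, h θ ≤ 1 ∧ r = ∑ i, g i * θ i} := by
  have hcompact : IsCompact {θ | h θ ≤ 1} :=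
    Metric.isCompact_of_isClosed_isBounded (isClosed_le hh.continuous continuous_const)
      hh.isBounded_setOf_le_one
  have himage : {r | ∃ θ : Fin m → ℝ, h θ ≤ 1 ∧ r = ∑ i, g i * θ i} =
      (fun θ => ∑ i, g i * θ i) '' {θ | h θ ≤ 1} := by
    ext r
    simp [eq_comm]
  rw [himage]
  exact hcompact.bddAbove_image (Continuous.continuousOn (by fun_prop))

theorem sum_mul_le_mul_dualNorm (hh : IsNorm h) (g θ : Fin m → ℝ) :
    ∑ i, g i * θ i ≤ h θ * dualNorm h g := by
  rcases (hh.nonneg θ).eq_or_lt with hθ | hθ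
  · simp [hh.2.2 θ hθ.symm, hh.map_zero]
  have hunit : h ((h θ)⁻¹ • θ) ≤ 1 := by
    rw [hh.2.1, abs_of_pos (inv_pos.mpr hθ), inv_mul_cancel₀ hθ.ne']
  have hle : ∑ i, g i * ((h θ)⁻¹ • θ) i ≤ dualNorm h g :=
    le_csSup (hh.bddAbove_dualNorm_set g) ⟨_, hunit, rfl⟩
  simp only [Pi.smul_apply, smul_eq_mul, mul_left_comm _ (h θ)⁻¹, ← Finset.mul_sum] at hle
  rwa [inv_mul_le_iff₀ hθ] at hle

end IsNorm

theorem statement10_general {m n : ℕ}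
    (h : (Fin m → ℝ) → ℝ) (hh : IsNorm h)
    (M : Fin m → Fin n → ℝ) (hM : ∀ u : Euc n, dualNorm h (matVec M u) ≤ ‖u‖)
    (θ : Fin m → ℝ) (e : Euc n) (he : ‖e‖ = 1)
    (hext : ∑ i, θ i * matVec M e i = h θ) :
    ∀ j, ∑ i, M i j * θ i = h θ * e j := by
  set v : Euc n := WithLp.toLp 2 fun j => ∑ i, M i j * θ i
  have hpair : ∀ u : Euc n, inner ℝ v u = ∑ i, θ i * matVec M u i := fun u => by
    simp only [v, PiLp.inner_apply, matVec, RCLike.inner_apply, conj_trivial, Finset.mul_sum]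
    rw [Finset.sum_comm]
    exact Finset.sum_congr rfl fun _ _ => Finset.sum_congr rfl fun _ _ => by ring
  have hbound : ∀ u : Euc n, inner ℝ v u ≤ h θ * ‖u‖ := fun u => by
    rw [hpair u]
    calc ∑ i, θ i * matVec M u i = ∑ i, matVec M u i * θ i := by simp only [mul_comm]
      _ ≤ h θ * dualNorm h (matVec M u) := hh.sum_mul_le_mul_dualNorm _ θ
      _ ≤ h θ * ‖u‖ := mul_le_mul_of_nonneg_left (hM u) (hh.nonneg θ)
  intro j
  simpa [v] using congr($(eq_smul_of_inner_le_mul_norm hbound he (by rw [hpair, hext])) j)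

/-- if `M ∈ ∂H(0)` (i.e. `h_*(Mu) ≤ |u|` for all `u`), `e` is a unit
vector and `θ · (Me) = h(θ)`, then `Mᵀ θ = h(θ) e`. -/
theorem statement10 {m n : ℕ} (hm : 0 < m) (hn : 0 < n)
    (h : (Fin m → ℝ) → ℝ) (hh : IsNorm h)
    (M : Fin m → Fin n → ℝ) (hM : ∀ u : Euc n, dualNorm h (matVec M u) ≤ ‖u‖)
    (θ : Fin m → ℝ) (e : Euc n) (he : ‖e‖ = 1)
    (hext : ∑ i, θ i * matVec M e i = h θ) :
    ∀ j, ∑ i, M i j * θ i = h θ * e j :=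
  statement10_general h hh M hM θ e he hext
end
end

section
/- Let m, n be positive integers and F_0 a compactly supported finite ℝ^m-valued Borel measure on ℝ^n. Then F_0(ℝ^n) = 0 if and only if there exists a compactly supported finite ℝ^{m×n}-valued Borel measure F_1 with ∂F_1 = F_0. -/
open MeasureTheory

noncomputable section

/-- An `ℝ^{m×n}`-valued Borel measure on `ℝ^n`, given by its component signed measures. -/
abbrev MatMeas (m n : ℕ) := Fin m → Fin n → MeasureTheory.SignedMeasure (Euc n)

/-- An `ℝ^m`-valued Borel measure on `ℝ^n`, given by its component signed measures. -/
abbrev VecMeas (m n : ℕ) := Fin m → MeasureTheory.SignedMeasure (Euc n)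

/-- Integral of a function against a signed measure (via the Jordan decomposition). -/
def sInt {n : ℕ} (ν : MeasureTheory.SignedMeasure (Euc n)) (f : Euc n → ℝ) : ℝ :=
  ∫ x, f x ∂ν.toJordanDecomposition.posPart - ∫ x, f x ∂ν.toJordanDecomposition.negPart

/-- The total variation `|F|_H` of `F` with respect to the norm `H` generated by `h`:
the supremum of `Σ_k H(F(B_k))` over countable Borel partitions `(B_k)` of `ℝ^n`. -/
def tvH {m n : ℕ} (h : (Fin m → ℝ) → ℝ) (F : MatMeas m n) : ℝ :=
  sSup {r | ∃ B : ℕ → Set (Euc n), (∀ k, MeasurableSet (B k)) ∧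
    Pairwise (Function.onFun Disjoint B) ∧ (⋃ k, B k) = Set.univ ∧
    r = ∑' k, genNorm h (fun i j => F i j (B k))}

/-- `F` is supported in `K`: it vanishes on Borel sets disjoint from `K`. -/
def suppIn {m n : ℕ} (F : MatMeas m n) (K : Set (Euc n)) : Prop :=
  ∀ B : Set (Euc n), MeasurableSet B → Disjoint B K → ∀ i j, F i j B = 0

/-- `F` is compactly supported. -/
def suppInCpt {m n : ℕ} (F : MatMeas m n) : Prop :=
  ∃ K : Set (Euc n), IsCompact K ∧ suppIn F K

/-- `F₀` is compactly supported. -/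
def vSuppInCpt {m n : ℕ} (F0 : VecMeas m n) : Prop :=
  ∃ K : Set (Euc n), IsCompact K ∧
    ∀ B : Set (Euc n), MeasurableSet B → Disjoint B K → ∀ i, F0 i B = 0

/-- The Jacobian matrix `Dψ(x) ∈ ℝ^{m×n}` of `ψ : ℝ^n → ℝ^m`. -/
def jac {m n : ℕ} (ψ : Euc n → (Fin m → ℝ)) (x : Euc n) : Fin m → Fin n → ℝ :=
  fun i j => fderiv ℝ ψ x (EuclideanSpace.single j 1) i

/-- `∂F = F₀`, i.e. `∫ Dψ : dF = ∫ ψ · dF₀` for all smooth compactly supported `ψ`. -/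
def isBoundary {m n : ℕ} (F : MatMeas m n) (F0 : VecMeas m n) : Prop :=
  ∀ ψ : Euc n → (Fin m → ℝ), ContDiff ℝ (⊤ : ℕ∞) ψ → HasCompactSupport ψ →
    (∑ i, ∑ j, sInt (F i j) fun x => jac ψ x i j) = ∑ i, sInt (F0 i) fun x => ψ x i

/-- `φ` is an admissible dual potential: `h_*(φ(y) - φ(x)) ≤ |y - x|`. -/
def admissible {m n : ℕ} (h : (Fin m → ℝ) → ℝ) (φ : Euc n → Fin m → ℝ) : Prop :=
  ∀ x y : Euc n, dualNorm h (φ y - φ x) ≤ ‖y - x‖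

/-- The dual objective `∫ φ · dF₀`. -/
def intDual {m n : ℕ} (F0 : VecMeas m n) (φ : Euc n → Fin m → ℝ) : ℝ :=
  ∑ i, sInt (F0 i) fun x => φ x i

/-! Necessity: testing `∂F₁ = F₀` against `ψ = c eᵢ`, with `c` a bump function equal to `1` near
both supports, kills the left side (`Dψ = 0` there) and leaves `F₀ i (ℝⁿ)` on the right.

Sufficiency: take `F₁ i j` to be the cone `∫₀¹ (x ↦ t x)_♯ (x_j F₀ i) dt`. Then
`∫ Dψ : dF₁ = ∑ᵢ ∫ ∫₀¹ Dψᵢ(t x) x dt dF₀ᵢ(x) = ∑ᵢ ∫ (ψᵢ(x) - ψᵢ(0)) dF₀ᵢ(x)`, and the `ψ(0)` term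
is `ψ(0) · F₀(ℝⁿ) = 0`. Signed measures are handled through their Jordan decompositions, and the
weight `x_j` is truncated at the radius of a ball carrying `F₀`, so that every measure in sight
is finite. -/

open Set Metric
open scoped ENNReal

section JordanDecomposition

variable {α : Type*} [MeasurableSpace α]

def VanishesOff (ν : SignedMeasure α) (K : Set α) : Prop :=
  ∀ B, MeasurableSet B → Disjoint B K → ν B = 0

namespace VanishesOff

variable {ν : SignedMeasure α} {K : Set α}

theorem posPart_compl (h : VanishesOff ν K) (hK : MeasurableSet K) :
    ν.toJordanDecomposition.posPart Kᶜ = 0 := by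
  obtain ⟨P, hP, hνP, -, hpos, -⟩ := ν.toJordanDecomposition_spec
  rw [hpos, SignedMeasure.toMeasureOfZeroLE_apply _ hνP hP hK.compl]
  simp [h _ (hP.inter hK.compl) (disjoint_compl_left.mono_left inter_subset_right)]

theorem neg (h : VanishesOff ν K) : VanishesOff (-ν) K := fun B hB hd => by
  simp [h B hB hd]

theorem negPart_compl (h : VanishesOff ν K) (hK : MeasurableSet K) :
    ν.toJordanDecomposition.negPart Kᶜ = 0 := by
  simpa [SignedMeasure.toJordanDecomposition_neg] using h.neg.posPart_compl hK

end VanishesOff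

theorem posPart_add_eq_negPart_add (μ₁ μ₂ : Measure α) [IsFiniteMeasure μ₁]
    [IsFiniteMeasure μ₂] :
    (μ₁.toSignedMeasure - μ₂.toSignedMeasure).toJordanDecomposition.posPart + μ₂ =
      (μ₁.toSignedMeasure - μ₂.toSignedMeasure).toJordanDecomposition.negPart + μ₁ := by
  ext B hB
  have h := (μ₁.toSignedMeasure - μ₂.toSignedMeasure).apply_eq_posPart_real_sub_negPart_real hB
  rw [Measure.toSignedMeasure_sub_apply hB] at h
  rw [← ENNReal.toReal_eq_toReal_iff' (measure_ne_top _ _) (measure_ne_top _ _)]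
  simp only [Measure.add_apply, ENNReal.toReal_add (measure_ne_top _ _) (measure_ne_top _ _)]
  simp only [measureReal_def] at h
  linarith

end JordanDecomposition

theorem Continuous.integrable_of_compl_null {E : Type*} [TopologicalSpace E] [T2Space E]
    [MeasurableSpace E] [OpensMeasurableSpace E] {μ : Measure E} [IsFiniteMeasure μ]
    {f : E → ℝ} (hf : Continuous f) {K : Set E} (hK : IsCompact K) (hμK : μ Kᶜ = 0) :
    Integrable f μ := by
  have hfK : IntegrableOn f K μ := hf.continuousOn.integrableOn_compact hK
  rwa [IntegrableOn, Measure.restrict_eq_self_of_ae_mem (mem_ae_iff.2 hμK)] at hfK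

section sInt

variable {n : ℕ} {ν : SignedMeasure (Euc n)} {K : Set (Euc n)}

theorem sInt_congr (hν : VanishesOff ν K) (hK : MeasurableSet K) {f g : Euc n → ℝ}
    (hfg : EqOn f g K) : sInt ν f = sInt ν g := by
  have hae : ∀ μ : Measure (Euc n), μ Kᶜ = 0 → ∫ x, f x ∂μ = ∫ x, g x ∂μ := fun μ hμ =>
    integral_congr_ae (Filter.Eventually.mono (mem_ae_iff.2 hμ) fun _ hx => hfg hx)
  rw [sInt, sInt, hae _ (hν.posPart_compl hK), hae _ (hν.negPart_compl hK)]

theorem sInt_const (c : ℝ) : sInt ν (fun _ => c) = c * ν univ := by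
  rw [sInt, integral_const, integral_const, ν.apply_eq_posPart_real_sub_negPart_real .univ]
  simp only [smul_eq_mul]
  ring

theorem sInt_finset_sum {ι : Type*} (s : Finset ι) (hν : VanishesOff ν K) (hK : IsCompact K)
    {f : ι → Euc n → ℝ} (hf : ∀ i, Continuous (f i)) :
    sInt ν (fun x => ∑ i ∈ s, f i x) = ∑ i ∈ s, sInt ν (f i) := by
  have hKm := hK.measurableSet
  simp only [sInt]
  rw [integral_finsetSum _ fun i _ =>
      (hf i).integrable_of_compl_null hK (hν.posPart_compl hKm),
    integral_finsetSum _ fun i _ =>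
      (hf i).integrable_of_compl_null hK (hν.negPart_compl hKm),
    Finset.sum_sub_distrib]

theorem sInt_sub_const (hν : VanishesOff ν K) (hK : IsCompact K) {f : Euc n → ℝ}
    (hf : Continuous f) (c : ℝ) : sInt ν (fun x => f x - c) = sInt ν f - c * ν univ := by
  have hKm := hK.measurableSet
  rw [← sInt_const, sInt, sInt, sInt,
    integral_sub (hf.integrable_of_compl_null hK (hν.posPart_compl hKm))
      (integrable_const c),
    integral_sub (hf.integrable_of_compl_null hK (hν.negPart_compl hKm))
      (integrable_const c)]
  ring

theorem sInt_toSignedMeasure_sub (μ₁ μ₂ : Measure (Euc n)) [IsFiniteMeasure μ₁]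
    [IsFiniteMeasure μ₂] {f : Euc n → ℝ} (hf : StronglyMeasurable f) {C : ℝ}
    (hC : ∀ x, ‖f x‖ ≤ C) :
    sInt (μ₁.toSignedMeasure - μ₂.toSignedMeasure) f = ∫ x, f x ∂μ₁ - ∫ x, f x ∂μ₂ := by
  have hint : ∀ (μ : Measure (Euc n)) [IsFiniteMeasure μ], Integrable f μ := fun μ _ =>
    .of_bound hf.aestronglyMeasurable C (ae_of_all _ hC)
  have h := congrArg (fun μ => ∫ x, f x ∂μ) (posPart_add_eq_negPart_add μ₁ μ₂)
  simp only [integral_add_measure (hint _) (hint _)] at h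
  rw [sInt]
  linarith

end sInt

section TruncatedWeight

variable {α : Type*} [MeasurableSpace α]

/-- The cap `C` makes the measure finite for every `f`. -/
def withTruncDensity (μ : Measure α) (f : α → ℝ) (C : ℝ) : Measure α :=
  μ.withDensity fun x => ((min (f x) C).toNNReal : ℝ≥0∞)

instance (μ : Measure α) [IsFiniteMeasure μ] (f : α → ℝ) (C : ℝ) :
    IsFiniteMeasure (withTruncDensity μ f C) := by
  refine isFiniteMeasure_withDensity (ne_top_of_le_ne_top
    (lintegral_const_lt_top (μ := μ) (c := (C.toNNReal : ℝ≥0∞)) ENNReal.coe_ne_top).ne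
    (lintegral_mono fun x => ?_))
  exact ENNReal.coe_le_coe.2 (Real.toNNReal_le_toNNReal (min_le_right _ _))

theorem withTruncDensity_apply_eq_zero {μ : Measure α} (f : α → ℝ) (C : ℝ) {B : Set α}
    (hB : μ B = 0) : withTruncDensity μ f C B = 0 :=
  withDensity_absolutelyContinuous μ _ hB

theorem integral_withTruncDensity (μ : Measure α) {f : α → ℝ} (hf : Measurable f) (C : ℝ)
    (g : α → ℝ) :
    ∫ x, g x ∂(withTruncDensity μ f C) = ∫ x, max (min (f x) C) 0 * g x ∂μ := by
  rw [withTruncDensity, integral_withDensity_eq_integral_smul (by fun_prop)]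
  simp [NNReal.smul_def, Real.coe_toNNReal']

theorem integral_withTruncDensity_sub_neg (μ : Measure α) [IsFiniteMeasure μ] {K : Set α}
    (hμK : μ Kᶜ = 0) {f : α → ℝ} (hf : Measurable f) {C : ℝ} (hfK : ∀ x ∈ K, |f x| ≤ C)
    {g : α → ℝ} (hg : AEStronglyMeasurable g μ) {D : ℝ} (hgD : ∀ x, ‖g x‖ ≤ D) :
    ∫ x, g x ∂(withTruncDensity μ f C) - ∫ x, g x ∂(withTruncDensity μ (-f) C) =
      ∫ x, f x * g x ∂μ := by
  have hint : ∀ {h : α → ℝ}, Measurable h →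
      Integrable (fun x => max (min (h x) C) 0 * g x) μ := fun hh =>
    .of_bound (by fun_prop) (max C 0 * D) (ae_of_all _ fun x => by
      rw [norm_mul, Real.norm_of_nonneg (le_max_right _ _)]
      exact mul_le_mul (max_le_max_right _ (min_le_right _ _)) (hgD x) (norm_nonneg _)
        (le_max_right _ _))
  rw [integral_withTruncDensity _ hf, integral_withTruncDensity _ hf.neg,
    ← integral_sub (hint hf) (hint hf.neg)]
  refine integral_congr_ae (Filter.Eventually.mono (mem_ae_iff.2 hμK) fun x hx => ?_)
  have ⟨hlo, hhi⟩ := abs_le.1 (hfK x hx)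
  simp only [Pi.neg_apply, min_eq_left hhi, min_eq_left (neg_le.1 hlo)]
  rw [← sub_mul, max_zero_sub_max_neg_zero_eq_self]

/-- The signed measure `f • ν`, provided `|f| ≤ C` on a set carrying `ν`. -/
def weightedBy (ν : SignedMeasure α) (f : α → ℝ) (C : ℝ) : SignedMeasure α :=
  (withTruncDensity ν.toJordanDecomposition.posPart f C +
      withTruncDensity ν.toJordanDecomposition.negPart (-f) C).toSignedMeasure -
    (withTruncDensity ν.toJordanDecomposition.posPart (-f) C +
      withTruncDensity ν.toJordanDecomposition.negPart f C).toSignedMeasure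

theorem VanishesOff.weightedBy {ν : SignedMeasure α} {K : Set α} (hν : VanishesOff ν K)
    (hK : MeasurableSet K) (f : α → ℝ) (C : ℝ) : VanishesOff (weightedBy ν f C) K := by
  intro B hB hBK
  have hp := measure_mono_null (subset_compl_iff_disjoint_right.2 hBK) (hν.posPart_compl hK)
  have hn := measure_mono_null (subset_compl_iff_disjoint_right.2 hBK) (hν.negPart_compl hK)
  simp [_root_.weightedBy, measureReal_def,
    withTruncDensity_apply_eq_zero _ _ hp, withTruncDensity_apply_eq_zero _ _ hn]

end TruncatedWeight

theorem sInt_weightedBy {n : ℕ} {ν : SignedMeasure (Euc n)} {K : Set (Euc n)}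
    (hν : VanishesOff ν K) (hK : MeasurableSet K) {f : Euc n → ℝ} (hf : Measurable f) {C : ℝ}
    (hfK : ∀ x ∈ K, |f x| ≤ C) {g : Euc n → ℝ} (hg : StronglyMeasurable g) {D : ℝ}
    (hgD : ∀ x, ‖g x‖ ≤ D) :
    sInt (weightedBy ν f C) g = sInt ν fun x => f x * g x := by
  have hint : ∀ (μ : Measure (Euc n)) [IsFiniteMeasure μ], Integrable g μ := fun μ _ =>
    .of_bound hg.aestronglyMeasurable D (ae_of_all _ hgD)
  have hp := integral_withTruncDensity_sub_neg _ (hν.posPart_compl hK) hf hfK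
    hg.aestronglyMeasurable hgD
  have hn := integral_withTruncDensity_sub_neg _ (hν.negPart_compl hK) hf hfK
    hg.aestronglyMeasurable hgD
  rw [weightedBy, sInt_toSignedMeasure_sub _ _ hg hgD, integral_add_measure (hint _) (hint _),
    integral_add_measure (hint _) (hint _), sInt]
  linarith

section Cone

variable {E : Type*} [NormedAddCommGroup E] [NormedSpace ℝ E]

theorem continuous_segmentAverage [LocallyCompactSpace E] {g : E → ℝ} (hg : Continuous g) :
    Continuous fun x : E => ∫ t in Icc (0 : ℝ) 1, g (t • x) :=
  continuous_parametric_integral_of_continuous (by fun_prop) isCompact_Icc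

theorem norm_segmentAverage_le {g : E → ℝ} {C : ℝ} (hgC : ∀ x, ‖g x‖ ≤ C) (x : E) :
    ‖∫ t in Icc (0 : ℝ) 1, g (t • x)‖ ≤ C := by
  simpa using norm_integral_le_of_norm_le_const (μ := volume.restrict (Icc (0 : ℝ) 1))
    (ae_of_all _ fun t => hgC (t • x))

variable [MeasurableSpace E] [BorelSpace E] [SecondCountableTopology E]

/-- Each point mass `δ_x` of `μ` is spread uniformly over the segment `[0, x]`. -/
def cone (μ : Measure E) : Measure E :=
  ((volume.restrict (Icc (0 : ℝ) 1)).prod μ).map fun z => z.1 • z.2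

instance (μ : Measure E) [IsFiniteMeasure μ] : IsFiniteMeasure (cone μ) :=
  Measure.isFiniteMeasure_map _ _

theorem cone_compl_closedBall {μ : Measure E} [SFinite μ] {R : ℝ}
    (hμ : μ (closedBall 0 R)ᶜ = 0) : cone μ (closedBall 0 R)ᶜ = 0 := by
  have hsmul : Measurable fun z : ℝ × E => z.1 • z.2 := by fun_prop
  rw [cone, Measure.map_apply hsmul measurableSet_closedBall.compl]
  refine measure_mono_null (t := (Icc 0 1 ×ˢ closedBall 0 R)ᶜ) ?_ ?_
  · rintro ⟨t, x⟩ hz ⟨ht, hx⟩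
    refine hz (mem_closedBall_zero_iff.2 ?_)
    rw [norm_smul, Real.norm_of_nonneg ht.1]
    exact (mul_le_of_le_one_left (norm_nonneg _) ht.2).trans (mem_closedBall_zero_iff.1 hx)
  · rw [compl_prod_eq_union]
    refine measure_union_null ?_ ?_
    · rw [Measure.prod_prod, Measure.restrict_apply' measurableSet_Icc, compl_inter_self,
        measure_empty, zero_mul]
    · rw [Measure.prod_prod, hμ, mul_zero]

theorem integral_cone (μ : Measure E) [IsFiniteMeasure μ] {g : E → ℝ} (hg : Continuous g)
    {C : ℝ} (hgC : ∀ x, ‖g x‖ ≤ C) :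
    ∫ y, g y ∂(cone μ) = ∫ x, (∫ t in Icc (0 : ℝ) 1, g (t • x)) ∂μ := by
  have hsmul : Continuous fun z : ℝ × E => z.1 • z.2 := by fun_prop
  rw [cone, integral_map hsmul.aemeasurable hg.aestronglyMeasurable]
  exact integral_prod_symm (fun z : ℝ × E => g (z.1 • z.2))
    (.of_bound (hg.comp hsmul).aestronglyMeasurable C (ae_of_all _ fun z => hgC _))

def signedCone (ν : SignedMeasure E) : SignedMeasure E :=
  (cone ν.toJordanDecomposition.posPart).toSignedMeasure -
    (cone ν.toJordanDecomposition.negPart).toSignedMeasure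

theorem VanishesOff.signedCone {ν : SignedMeasure E} {R : ℝ}
    (hν : VanishesOff ν (closedBall 0 R)) : VanishesOff (signedCone ν) (closedBall 0 R) := by
  intro B hB hBR
  have hsub := subset_compl_iff_disjoint_right.2 hBR
  have hp := measure_mono_null hsub
    (cone_compl_closedBall (hν.posPart_compl measurableSet_closedBall))
  have hn := measure_mono_null hsub
    (cone_compl_closedBall (hν.negPart_compl measurableSet_closedBall))
  simp [_root_.signedCone, measureReal_def, hp, hn]

end Cone

theorem sInt_signedCone {n : ℕ} (ν : SignedMeasure (Euc n)) {g : Euc n → ℝ}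
    (hg : Continuous g) {C : ℝ} (hgC : ∀ x, ‖g x‖ ≤ C) :
    sInt (signedCone ν) g = sInt ν fun x => ∫ t in Icc (0 : ℝ) 1, g (t • x) := by
  rw [signedCone, sInt_toSignedMeasure_sub _ _ hg.stronglyMeasurable hgC,
    integral_cone _ hg hgC, integral_cone _ hg hgC, sInt]

theorem integral_fderiv_segment {E : Type*} [NormedAddCommGroup E] [NormedSpace ℝ E]
    {f : E → ℝ} (hf : ContDiff ℝ 1 f) (x : E) :
    ∫ t in Icc (0 : ℝ) 1, fderiv ℝ f (t • x) x = f x - f 0 := by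
  have hderiv : ∀ t : ℝ, HasDerivAt (fun t : ℝ => f (t • x)) (fderiv ℝ f (t • x) x) t :=
    fun t => ((hf.differentiable one_ne_zero) (t • x)).hasFDerivAt.comp_hasDerivAt t
      (by simpa using (hasDerivAt_id t).smul_const x)
  have hcont : Continuous fun t : ℝ => fderiv ℝ f (t • x) x :=
    ((hf.continuous_fderiv one_ne_zero).comp (by fun_prop)).clm_apply continuous_const
  rw [integral_Icc_eq_integral_Ioc, ← intervalIntegral.integral_of_le zero_le_one,
    intervalIntegral.integral_eq_sub_of_hasDerivAt (fun t _ => hderiv t)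
      (hcont.intervalIntegrable 0 1)]
  simp

section Jacobian

variable {m n : ℕ} {ψ : Euc n → Fin m → ℝ}

theorem continuous_jac (hψ : ContDiff ℝ 1 ψ) (i : Fin m) (j : Fin n) :
    Continuous fun x => jac ψ x i j :=
  (continuous_apply i).comp ((hψ.continuous_fderiv one_ne_zero).clm_apply continuous_const)

theorem HasCompactSupport.jac (hψ : HasCompactSupport ψ) (i : Fin m) (j : Fin n) :
    HasCompactSupport fun x => _root_.jac ψ x i j :=
  (hψ.fderiv (𝕜 := ℝ)).comp_left (g := fun L : Euc n →L[ℝ] (Fin m → ℝ) =>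
    L (EuclideanSpace.single j 1) i) (by simp)

theorem fderiv_apply_eq_sum_jac (y x : Euc n) (i : Fin m) :
    fderiv ℝ ψ y x i = ∑ j, x j * jac ψ y i j := by
  conv_lhs => rw [← (EuclideanSpace.basisFun (Fin n) ℝ).sum_repr x]
  simp [jac]

theorem fderiv_component (hψ : ContDiff ℝ 1 ψ) (y x : Euc n) (i : Fin m) :
    fderiv ℝ (fun z => ψ z i) y x = fderiv ℝ ψ y x i := by
  rw [(hasFDerivAt_pi'.1 ((hψ.differentiable one_ne_zero) y).hasFDerivAt i).fderiv]
  rfl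

theorem sum_mul_segmentAverage_jac (hψ : ContDiff ℝ 1 ψ) (x : Euc n) (i : Fin m) :
    ∑ j, x j * ∫ t in Icc (0 : ℝ) 1, jac ψ (t • x) i j = ψ x i - ψ 0 i := by
  have hint : ∀ j, Integrable (fun t : ℝ => x j * jac ψ (t • x) i j)
      (volume.restrict (Icc 0 1)) := fun j =>
    (continuous_const.mul ((continuous_jac hψ i j).comp (by fun_prop))).integrableOn_Icc
  simp_rw [← integral_const_mul]
  rw [← integral_finsetSum _ fun j _ => hint j]
  simp_rw [← fderiv_apply_eq_sum_jac, ← fderiv_component hψ]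
  exact integral_fderiv_segment ((contDiff_apply ℝ ℝ i).comp hψ) x

theorem jac_eq_zero_of_eventuallyEq_const {x : Euc n} {v : Fin m → ℝ}
    (h : ψ =ᶠ[nhds x] fun _ => v) (i : Fin m) (j : Fin n) : jac ψ x i j = 0 := by
  simp [jac, h.fderiv_eq]

end Jacobian

section Boundary

variable {m n : ℕ}

def coneBoundary (F0 : VecMeas m n) (R : ℝ) : MatMeas m n :=
  fun i j => signedCone (weightedBy (F0 i) (fun x => x j) R)

variable {F0 : VecMeas m n} {R : ℝ}

theorem suppIn_coneBoundary (hF0 : ∀ i, VanishesOff (F0 i) (closedBall 0 R)) :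
    suppIn (coneBoundary F0 R) (closedBall 0 R) :=
  fun B hB hBR i _ => ((hF0 i).weightedBy measurableSet_closedBall _ R).signedCone B hB hBR

theorem isBoundary_coneBoundary (hF0 : ∀ i, VanishesOff (F0 i) (closedBall 0 R))
    (h0 : ∀ i, F0 i univ = 0) : isBoundary (coneBoundary F0 R) F0 := by
  intro ψ hψ hψc
  have hψ1 : ContDiff ℝ 1 ψ := hψ.of_le (by exact_mod_cast le_top)
  have hcoord : ∀ j : Fin n, ∀ x ∈ closedBall (0 : Euc n) R, |x j| ≤ R := fun j x hx =>
    (PiLp.norm_apply_le x j).trans (mem_closedBall_zero_iff.1 hx)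
  refine Finset.sum_congr rfl fun i _ => ?_
  calc ∑ j, sInt (coneBoundary F0 R i j) (fun x => jac ψ x i j)
      = ∑ j, sInt (F0 i) (fun x => x j * ∫ t in Icc (0 : ℝ) 1, jac ψ (t • x) i j) := by
        refine Finset.sum_congr rfl fun j _ => ?_
        obtain ⟨D, hD⟩ := (hψc.jac i j).exists_bound_of_continuous (continuous_jac hψ1 i j)
        rw [coneBoundary, sInt_signedCone _ (continuous_jac hψ1 i j) hD,
          sInt_weightedBy (hF0 i) measurableSet_closedBall (by fun_prop) (hcoord j)
            (continuous_segmentAverage (continuous_jac hψ1 i j)).stronglyMeasurable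
            (norm_segmentAverage_le hD)]
    _ = sInt (F0 i) (fun x => ψ x i - ψ 0 i) := by
        rw [← sInt_finset_sum _ (hF0 i) (isCompact_closedBall 0 R)
          (f := fun j x => x j * ∫ t in Icc (0 : ℝ) 1, jac ψ (t • x) i j) fun j =>
          (by fun_prop : Continuous fun x : Euc n => x j).mul
            (continuous_segmentAverage (continuous_jac hψ1 i j))]
        simp_rw [sum_mul_segmentAverage_jac hψ1]
    _ = sInt (F0 i) (fun x => ψ x i) := by
        rw [sInt_sub_const (hF0 i) (isCompact_closedBall 0 R) (f := fun x => ψ x i)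
          ((continuous_apply i).comp hψ.continuous), h0, mul_zero, sub_zero]

theorem univ_eq_zero_of_isBoundary {F1 : MatMeas m n}
    (hF0 : ∀ i, VanishesOff (F0 i) (closedBall 0 R)) (hF1 : suppIn F1 (closedBall 0 R))
    (hbd : isBoundary F1 F0) (i : Fin m) : F0 i univ = 0 := by
  let c : ContDiffBump (0 : Euc n) := ⟨|R| + 1, |R| + 2, by positivity, by linarith⟩
  let ψ : Euc n → Fin m → ℝ := fun x => c x • Pi.single i 1
  have hR : closedBall (0 : Euc n) R ⊆ ball 0 (|R| + 1) :=
    closedBall_subset_ball (by linarith [le_abs_self R])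
  have hψ_ball : ∀ x ∈ ball (0 : Euc n) (|R| + 1), ψ x = Pi.single i 1 := fun x hx => by
    simp [ψ, c.one_of_mem_closedBall (ball_subset_closedBall hx)]
  have hlhs : ∑ k, ∑ j, sInt (F1 k j) (fun x => jac ψ x k j) = 0 := by
    refine Finset.sum_eq_zero fun k _ => Finset.sum_eq_zero fun j _ => ?_
    rw [sInt_congr (fun B hB hBR => hF1 B hB hBR k j) measurableSet_closedBall
      (g := fun _ => 0) fun x hx => jac_eq_zero_of_eventuallyEq_const
        (Filter.eventually_of_mem (isOpen_ball.mem_nhds (hR hx)) hψ_ball) k j,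
      sInt_const, zero_mul]
  have hrhs : ∑ k, sInt (F0 k) (fun x => ψ x k) = sInt (F0 i) (fun x => ψ x i) := by
    refine Finset.sum_eq_single i (fun k _ hki => ?_) (by simp)
    simpa [ψ, Pi.single_eq_of_ne hki] using sInt_const (ν := F0 k) 0
  calc F0 i univ = sInt (F0 i) fun _ => 1 := by rw [sInt_const, one_mul]
    _ = sInt (F0 i) (fun x => ψ x i) := sInt_congr (hF0 i) measurableSet_closedBall
        fun x hx => by simp [hψ_ball x (hR hx)]
    _ = 0 := by
        rw [← hrhs, ← hbd ψ (c.contDiff.smul contDiff_const)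
          c.hasCompactSupport.smul_right, hlhs]

end Boundary

theorem statement12_general {m n : ℕ} (F0 : VecMeas m n) (hF0 : vSuppInCpt F0) :
    (∀ i, F0 i Set.univ = 0) ↔
      ∃ F1 : MatMeas m n, suppInCpt F1 ∧ isBoundary F1 F0 := by
  obtain ⟨K, hK, hF0K⟩ := hF0
  constructor
  · intro h0
    obtain ⟨R, hKR⟩ := hK.isBounded.subset_closedBall 0
    have hF0R : ∀ i, VanishesOff (F0 i) (closedBall 0 R) := fun i B hB hBR =>
      hF0K B hB (hBR.mono_right hKR) i
    exact ⟨coneBoundary F0 R, ⟨_, isCompact_closedBall 0 R, suppIn_coneBoundary hF0R⟩,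
      isBoundary_coneBoundary hF0R h0⟩
  · rintro ⟨F1, ⟨K1, hK1, hF1K1⟩, hbd⟩
    obtain ⟨R, hR⟩ := (hK.union hK1).isBounded.subset_closedBall 0
    exact univ_eq_zero_of_isBoundary
      (fun i B hB hBR => hF0K B hB (hBR.mono_right (subset_union_left.trans hR)) i)
      (fun B hB hBR => hF1K1 B hB (hBR.mono_right (subset_union_right.trans hR))) hbd

/-- a compactly supported finite `ℝ^m`-valued measure `F₀` satisfies
`F₀(ℝ^n) = 0` if and only if there is a compactly supported finite `ℝ^{m×n}`-valued
measure `F₁` with `∂F₁ = F₀`. -/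
theorem statement12 {m n : ℕ} (hm : 0 < m) (hn : 0 < n)
    (F0 : VecMeas m n) (hF0 : vSuppInCpt F0) :
    (∀ i, F0 i Set.univ = 0) ↔
      ∃ F1 : MatMeas m n, suppInCpt F1 ∧ isBoundary F1 F0 :=
  statement12_general F0 hF0
end
end
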